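/- Let v be a probability density on ℝ with finite moments of all orders whose support is infinite (so the Gram matrices of monomials are positive definite), with orthonormal polynomial basis {H_n} and Jacobi matrix J_N ∈ ℝ^{(N+1)×(N+1)}. Then for every polynomial p of degree at most 2N+1, ∫_ℝ p(x) v(x) dx = (p(J_N))_{1,1} = e₁ᵀ p(J_N) e₁, where p(J_N) denotes the evaluation of the polynomial p at the matrix J_N and e₁ is the first standard basis vector of ℝ^{N+1}. -/

import Mathlib

/-!
Let `L p = ∫ p v` and `c q = (L (q * H j))_{j ≤ N}`. If `deg p ≤ N` then `p = ∑ c p j • H j`,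
since the `H j` with `j ≤ N` span the polynomials of degree `≤ N`; this gives Parseval's identity
`L (p * q) = c p ⬝ᵥ c q` for every `q`. By the recurrence, `J i j = L (H i * X * H j)` is the Gram
matrix of multiplication by `X`, so Parseval becomes `J *ᵥ c q = c (X * q)` for `deg q ≤ N`,
whence `J ^ l *ᵥ e₀ = c (X ^ l)` for `l ≤ N + 1`. Writing `m ≤ 2N + 1` as `k + l` with `k ≤ N`,
`l ≤ N + 1` and using that `J` is symmetric,
`(J ^ m) 0 0 = (J ^ k *ᵥ e₀) ⬝ᵥ (J ^ l *ᵥ e₀) = c (X ^ k) ⬝ᵥ c (X ^ l) = L (X ^ m)`.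
-/

open MeasureTheory Polynomial Matrix

section OrthonormalBasis

variable {K : Type*} [Field K] (L : K[X] →ₗ[K] K) {H : ℕ → K[X]}

theorem sum_apply_mul_smul_eq_self (hHdeg : ∀ n, (H n).natDegree = n)
    (hortho : ∀ m n, L (H m * H n) = if m = n then 1 else 0) {N : ℕ} {p : K[X]}
    (hp : p.natDegree ≤ N) :
    ∑ j ∈ Finset.range (N + 1), L (p * H j) • H j = p := by
  have hne (n : ℕ) : H n ≠ 0 := fun h => by simpa [h] using hortho n n
  let S : Polynomial.Sequence K :=
    ⟨H, fun n => (degree_eq_iff_natDegree_eq (hne n)).mpr (hHdeg n)⟩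
  have hmem : p ∈ Submodule.span K (S '' Set.Iic N) := by
    rw [S.span_degreeLE fun i _ => (leadingCoeff_ne_zero.mpr (hne i)).isUnit]
    exact mem_degreeLE.mpr (degree_le_of_natDegree_le hp)
  clear hp
  induction hmem using Submodule.span_induction with
  | mem q hq =>
    obtain ⟨i, hi, rfl⟩ := hq
    simp [S, hortho, Nat.lt_succ_iff.mpr (Set.mem_Iic.mp hi)]
  | zero => simp
  | add p q _ _ hp hq => simp only [add_mul, map_add, add_smul, Finset.sum_add_distrib, hp, hq]
  | smul c p _ hp => simp only [smul_mul_assoc, map_smul, smul_assoc, ← Finset.smul_sum, hp]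

noncomputable def orthoCoeffs (H : ℕ → K[X]) (N : ℕ) (p : K[X]) : Fin (N + 1) → K :=
  fun j => L (p * H j)

theorem apply_mul_eq_orthoCoeffs_dotProduct (hHdeg : ∀ n, (H n).natDegree = n)
    (hortho : ∀ m n, L (H m * H n) = if m = n then 1 else 0) {N : ℕ} {p : K[X]}
    (hp : p.natDegree ≤ N) (q : K[X]) :
    L (p * q) = orthoCoeffs L H N p ⬝ᵥ orthoCoeffs L H N q := by
  conv_lhs => rw [← sum_apply_mul_smul_eq_self L hHdeg hortho hp]
  simp only [Finset.sum_mul, map_sum, smul_mul_assoc, map_smul, smul_eq_mul, dotProduct,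
    orthoCoeffs, mul_comm (H _) q]
  exact (Fin.sum_univ_eq_sum_range (fun j => L (p * H j) * L (q * H j)) (N + 1)).symm

theorem orthoCoeffs_one (hH0 : H 0 = 1) (hortho : ∀ m n, L (H m * H n) = if m = n then 1 else 0)
    (N : ℕ) : orthoCoeffs L H N 1 = Pi.single 0 1 := by
  ext j
  rw [orthoCoeffs, ← hH0, hortho, Pi.single_apply]
  rcases eq_or_ne j 0 with rfl | hj
  · simp
  · rw [if_neg hj, if_neg fun h => hj (Fin.ext h.symm)]

theorem jacobi_mulVec_orthoCoeffs (hHdeg : ∀ n, (H n).natDegree = n)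
    (hortho : ∀ m n, L (H m * H n) = if m = n then 1 else 0) {N : ℕ}
    {J : Matrix (Fin (N + 1)) (Fin (N + 1)) K} (hJ : ∀ i j, J i j = L (H i * (X * H j)))
    {q : K[X]} (hq : q.natDegree ≤ N) :
    J *ᵥ orthoCoeffs L H N q = orthoCoeffs L H N (X * q) := by
  ext j
  rw [orthoCoeffs, show X * q * H j = q * (X * H j) by ring,
    apply_mul_eq_orthoCoeffs_dotProduct L hHdeg hortho hq, dotProduct_comm]
  simp only [mulVec, dotProduct, orthoCoeffs, hJ, mul_assoc, mul_left_comm (H _) X]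

theorem jacobi_pow_mulVec_single_zero (hHdeg : ∀ n, (H n).natDegree = n) (hH0 : H 0 = 1)
    (hortho : ∀ m n, L (H m * H n) = if m = n then 1 else 0) {N : ℕ}
    {J : Matrix (Fin (N + 1)) (Fin (N + 1)) K} (hJ : ∀ i j, J i j = L (H i * (X * H j)))
    {k : ℕ} (hk : k ≤ N + 1) :
    (J ^ k) *ᵥ Pi.single 0 1 = orthoCoeffs L H N (X ^ k) := by
  induction k with
  | zero => rw [pow_zero, one_mulVec, pow_zero, orthoCoeffs_one L hH0 hortho]
  | succ k ih =>
    rw [pow_succ', ← mulVec_mulVec, ih (by omega),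
      jacobi_mulVec_orthoCoeffs L hHdeg hortho hJ (by simpa using Nat.le_of_lt_succ hk), pow_succ']

theorem isSymm_of_apply_eq_apply_mul_X_mul {N : ℕ} {J : Matrix (Fin (N + 1)) (Fin (N + 1)) K}
    (hJ : ∀ i j, J i j = L (H i * (X * H j))) : J.IsSymm :=
  IsSymm.ext fun i j => by rw [hJ, hJ]; ring_nf

theorem apply_X_pow_eq_jacobi_pow_apply (hHdeg : ∀ n, (H n).natDegree = n) (hH0 : H 0 = 1)
    (hortho : ∀ m n, L (H m * H n) = if m = n then 1 else 0) {N : ℕ}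
    {J : Matrix (Fin (N + 1)) (Fin (N + 1)) K} (hJ : ∀ i j, J i j = L (H i * (X * H j)))
    {m : ℕ} (hm : m ≤ 2 * N + 1) :
    L (X ^ m) = (J ^ m) 0 0 := by
  obtain ⟨k, l, hk, hl, rfl⟩ : ∃ k l, k ≤ N ∧ l ≤ N + 1 ∧ m = k + l :=
    ⟨min m N, m - min m N, min_le_right _ _, by omega, by omega⟩
  have hsymm := (isSymm_of_apply_eq_apply_mul_X_mul L hJ).pow k
  calc L (X ^ (k + l)) = orthoCoeffs L H N (X ^ k) ⬝ᵥ orthoCoeffs L H N (X ^ l) := by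
        rw [pow_add, apply_mul_eq_orthoCoeffs_dotProduct L hHdeg hortho (by simpa using hk)]
    _ = (J ^ k *ᵥ Pi.single 0 1) ⬝ᵥ (J ^ l *ᵥ Pi.single 0 1) := by
        rw [jacobi_pow_mulVec_single_zero L hHdeg hH0 hortho hJ (by omega),
          jacobi_pow_mulVec_single_zero L hHdeg hH0 hortho hJ hl]
    _ = Pi.single 0 1 ⬝ᵥ (J ^ (k + l) *ᵥ Pi.single 0 1) := by
        rw [pow_add, ← mulVec_mulVec, dotProduct_mulVec (Pi.single 0 1) (J ^ k),
          ← vecMul_transpose, hsymm.eq]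
    _ = (J ^ (k + l)) 0 0 := by simp

theorem apply_eq_aeval_jacobi_apply (hHdeg : ∀ n, (H n).natDegree = n) (hH0 : H 0 = 1)
    (hortho : ∀ m n, L (H m * H n) = if m = n then 1 else 0) {N : ℕ}
    {J : Matrix (Fin (N + 1)) (Fin (N + 1)) K} (hJ : ∀ i j, J i j = L (H i * (X * H j)))
    {p : K[X]} (hp : p.natDegree ≤ 2 * N + 1) :
    L p = aeval J p 0 0 := by
  conv_lhs => rw [p.as_sum_range_C_mul_X_pow]
  conv_rhs => rw [p.as_sum_range_C_mul_X_pow]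
  simp only [map_sum, C_mul', map_smul, aeval_X_pow, Matrix.sum_apply, Matrix.smul_apply]
  refine Finset.sum_congr rfl fun m hm => ?_
  rw [apply_X_pow_eq_jacobi_pow_apply L hHdeg hH0 hortho hJ
    (by have := Finset.mem_range.mp hm; omega)]

theorem apply_mul_X_mul_eq_of_recurrence (hortho : ∀ m n, L (H m * H n) = if m = n then 1 else 0)
    {a b : ℕ → K} (hrec0 : X * H 0 = C (b 1) * H 1 + C (a 0) * H 0)
    (hrec : ∀ n, 1 ≤ n →
      X * H n = C (b (n + 1)) * H (n + 1) + C (a n) * H n + C (b n) * H (n - 1))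
    (i j : ℕ) :
    L (H i * (X * H j)) = if i = j then a i else if i + 1 = j then b j
      else if j + 1 = i then b i else 0 := by
  rcases Nat.eq_zero_or_pos j with rfl | hj <;> [rw [hrec0]; rw [hrec j hj]] <;>
  simp only [mul_add, ← smul_eq_C_mul, mul_smul_comm, map_add, map_smul, hortho, smul_eq_mul,
    mul_ite, mul_one, mul_zero] <;>
  split_ifs <;> first | contradiction | omega | (subst_vars; ring)

end OrthonormalBasis

theorem integrable_eval_mul_of_integrable_abs_pow_mul {v : ℝ → ℝ}
    (hv_mom : ∀ n : ℕ, Integrable (fun x : ℝ => |x| ^ n * v x)) (p : ℝ[X]) :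
    Integrable fun x : ℝ => p.eval x * v x := by
  induction p using Polynomial.induction_on' with
  | add p q hp hq =>
    simp only [eval_add, add_mul]
    exact hp.add hq
  | monomial n c =>
    have hv : AEStronglyMeasurable v := by simpa using (hv_mom 0).aestronglyMeasurable
    have hxn : Integrable fun x : ℝ => x ^ n * v x :=
      (hv_mom n).mono ((continuous_pow n).aestronglyMeasurable.mul hv)
        (.of_forall fun x => by simp)
    simpa only [eval_monomial, mul_assoc] using hxn.const_mul c

noncomputable def momentFunctional (v : ℝ → ℝ)
    (hv_mom : ∀ n : ℕ, Integrable (fun x : ℝ => |x| ^ n * v x)) : ℝ[X] →ₗ[ℝ] ℝ where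
  toFun p := ∫ x, p.eval x * v x
  map_add' p q := by
    simp only [eval_add, add_mul]
    exact integral_add (integrable_eval_mul_of_integrable_abs_pow_mul hv_mom p)
      (integrable_eval_mul_of_integrable_abs_pow_mul hv_mom q)
  map_smul' c p := by
    simp only [eval_smul, smul_eq_mul, mul_assoc, integral_const_mul, RingHom.id_apply]

@[simp]
theorem momentFunctional_apply (v : ℝ → ℝ)
    (hv_mom : ∀ n : ℕ, Integrable (fun x : ℝ => |x| ^ n * v x)) (p : ℝ[X]) :
    momentFunctional v hv_mom p = ∫ x, p.eval x * v x :=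
  rfl

theorem gauss_quadrature_jacobi_matrix_general
    (N : ℕ)
    (v : ℝ → ℝ)
    (hv_mom : ∀ n : ℕ, Integrable (fun x : ℝ => |x| ^ n * v x))
    (H : ℕ → Polynomial ℝ)
    (hH0 : H 0 = 1) (hHdeg : ∀ n, (H n).natDegree = n)
    (hHortho : ∀ m n, ∫ x : ℝ, (H m).eval x * (H n).eval x * v x
      = if m = n then 1 else 0)
    (a b : ℕ → ℝ)
    (hHrec0 : X * H 0 = C (b 1) * H 1 + C (a 0) * H 0)
    (hHrec : ∀ n, 1 ≤ n → X * H n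
      = C (b (n + 1)) * H (n + 1) + C (a n) * H n + C (b n) * H (n - 1))
    (J : Matrix (Fin (N + 1)) (Fin (N + 1)) ℝ)
    (hJ : ∀ i j : Fin (N + 1), J i j =
      if (i : ℕ) = (j : ℕ) then a i
      else if (i : ℕ) + 1 = (j : ℕ) then b j
      else if (j : ℕ) + 1 = (i : ℕ) then b i
      else 0) :
    ∀ p : Polynomial ℝ, p.natDegree ≤ 2 * N + 1 →
      (∫ x : ℝ, p.eval x * v x) = (Polynomial.aeval J p) 0 0 ∧
      (∫ x : ℝ, p.eval x * v x)
        = Pi.single 0 1 ⬝ᵥ (Polynomial.aeval J p).mulVec (Pi.single 0 1) := by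
  intro p hp
  let L := momentFunctional v hv_mom
  have hortho : ∀ m n, L (H m * H n) = if m = n then 1 else 0 := by
    simpa only [L, momentFunctional_apply, eval_mul] using hHortho
  have hJL : ∀ i j : Fin (N + 1), J i j = L (H i * (X * H j)) := fun i j => by
    rw [hJ, apply_mul_X_mul_eq_of_recurrence L hortho hHrec0 hHrec]
  have hquad : ∫ x, p.eval x * v x = aeval J p 0 0 :=
    apply_eq_aeval_jacobi_apply L hHdeg hH0 hortho hJL hp
  exact ⟨hquad, by simpa using hquad⟩

/-- Gauss quadrature exactness via the Jacobi matrix: if `v` is a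
probability density on ℝ with finite moments of all orders and infinite support,
with orthonormal polynomial basis `{H n}` and Jacobi matrix `J_N`, then for every
polynomial `p` of degree at most `2N+1`,
`∫ p v = (p(J_N))_{1,1} = e₁ᵀ p(J_N) e₁`. -/
theorem gauss_quadrature_jacobi_matrix
    (N : ℕ)
    (v : ℝ → ℝ) (hv_meas : Measurable v) (hv_nonneg : ∀ x, 0 ≤ v x)
    (hv_prob : ∫ x : ℝ, v x = 1)
    (hv_mom : ∀ n : ℕ, Integrable (fun x : ℝ => |x| ^ n * v x))
    (hv_supp : {x : ℝ | v x ≠ 0}.Infinite)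
    (H : ℕ → Polynomial ℝ)
    (hH0 : H 0 = 1) (hHdeg : ∀ n, (H n).natDegree = n)
    (hHortho : ∀ m n, ∫ x : ℝ, (H m).eval x * (H n).eval x * v x
      = if m = n then 1 else 0)
    (a b : ℕ → ℝ)
    (hHrec0 : X * H 0 = C (b 1) * H 1 + C (a 0) * H 0)
    (hHrec : ∀ n, 1 ≤ n → X * H n
      = C (b (n + 1)) * H (n + 1) + C (a n) * H n + C (b n) * H (n - 1))
    (J : Matrix (Fin (N + 1)) (Fin (N + 1)) ℝ)
    (hJ : ∀ i j : Fin (N + 1), J i j =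
      if (i : ℕ) = (j : ℕ) then a i
      else if (i : ℕ) + 1 = (j : ℕ) then b j
      else if (j : ℕ) + 1 = (i : ℕ) then b i
      else 0) :
    ∀ p : Polynomial ℝ, p.natDegree ≤ 2 * N + 1 →
      (∫ x : ℝ, p.eval x * v x) = (Polynomial.aeval J p) 0 0 ∧
      (∫ x : ℝ, p.eval x * v x)
        = Pi.single 0 1 ⬝ᵥ (Polynomial.aeval J p).mulVec (Pi.single 0 1) :=
  gauss_quadrature_jacobi_matrix_general N v hv_mom H hH0 hHdeg hHortho a b hHrec0 hHrec J hJ
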